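/- For every n ≥ 1, the product X_1·X_2·⋯·X_n equals |X_1·Q_{n−1} − P_{n−1}|. -/

import Mathlib

open Filter Topology

/-- `cfP a n` is the continued fraction numerator `P_{n-1}` of the sequence
`a 1, a 2, …` (so `cfP a 0 = P_{-1} = 1`, `cfP a 1 = P_0 = 0`, and
`P_n = a_n P_{n-1} + P_{n-2}` for `n ≥ 1`). -/
def cfP (a : ℕ → ℕ) : ℕ → ℤ
  | 0 => 1
  | 1 => 0
  | n + 2 => (a (n + 1) : ℤ) * cfP a (n + 1) + cfP a n

/-- `cfQ a n` is the continued fraction denominator `Q_{n-1}` of the sequence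
`a 1, a 2, …` (so `cfQ a 0 = Q_{-1} = 0`, `cfQ a 1 = Q_0 = 1`, and
`Q_n = a_n Q_{n-1} + Q_{n-2}` for `n ≥ 1`). -/
def cfQ (a : ℕ → ℕ) : ℕ → ℤ
  | 0 => 0
  | 1 => 1
  | n + 2 => (a (n + 1) : ℤ) * cfQ a (n + 1) + cfQ a n

/-- The `n`-th convergent `P_n / Q_n = [a_1, …, a_n]`. -/
noncomputable def cfConv (a : ℕ → ℕ) (n : ℕ) : ℝ :=
  (cfP a (n + 1) : ℝ) / (cfQ a (n + 1) : ℝ)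

/-- The sequence `a_k, a_{k+1}, a_{k+2}, …` (the tail of `a` starting at
index `k ≥ 1`), reindexed from `1`. -/
def cfShift (a : ℕ → ℕ) (k : ℕ) : ℕ → ℕ := fun i => a (i + k - 1)

/-! With `E_m = X_1 Q_{m-1} - P_{m-1}`, the recurrences for `P` and `Q` give
`E_{m+1} = a_m E_m + E_{m-1}`, while letting `N → ∞` in
`[a_k, …, a_N] = 1 / (a_k + [a_{k+1}, …, a_N])` gives `X_k (a_k + X_{k+1}) = 1`.
Together these yield `E_{m+1} = -X_{m+1} E_m`, so `E_n = (-1)^(n+1) X_1 ⋯ X_n`, and all `X_k` are nonnegative. -/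

lemma cfP_nonneg (b : ℕ → ℕ) : ∀ n, 0 ≤ cfP b n
  | 0 | 1 => by simp [cfP]
  | n + 2 => by
    have := cfP_nonneg b (n + 1)
    have := cfP_nonneg b n
    simp only [cfP]
    positivity

lemma cfQ_nonneg (b : ℕ → ℕ) : ∀ n, 0 ≤ cfQ b n
  | 0 | 1 => by simp [cfQ]
  | n + 2 => by
    have := cfQ_nonneg b (n + 1)
    have := cfQ_nonneg b n
    simp only [cfQ]
    positivity

lemma one_le_cfQ_succ (b : ℕ → ℕ) (hb : ∀ i, 1 ≤ i → 1 ≤ b i) : ∀ n, 1 ≤ cfQ b (n + 1)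
  | 0 => le_rfl
  | n + 1 => by
    have := one_le_cfQ_succ b hb n
    have := cfQ_nonneg b n
    have : (1 : ℤ) ≤ b (n + 1) := by exact_mod_cast hb (n + 1) n.succ_pos
    show 1 ≤ (b (n + 1) : ℤ) * cfQ b (n + 1) + cfQ b n
    nlinarith

lemma cfConv_nonneg (b : ℕ → ℕ) (n : ℕ) : 0 ≤ cfConv b n := by
  have := cfP_nonneg b (n + 1)
  have := cfQ_nonneg b (n + 1)
  unfold cfConv
  positivity

lemma cfP_succ (b : ℕ → ℕ) : ∀ n, cfP b (n + 1) = cfQ (fun i => b (i + 1)) n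
  | 0 | 1 => by simp [cfP, cfQ]
  | n + 2 => by
    show (b (n + 2) : ℤ) * cfP b (n + 2) + cfP b (n + 1) = _
    rw [cfP_succ b (n + 1), cfP_succ b n]
    rfl

lemma cfQ_succ (b : ℕ → ℕ) :
    ∀ n, cfQ b (n + 1) = b 1 * cfQ (fun i => b (i + 1)) n + cfP (fun i => b (i + 1)) n
  | 0 | 1 => by simp [cfP, cfQ]
  | n + 2 => by
    show (b (n + 2) : ℤ) * cfQ b (n + 2) + cfQ b (n + 1) = _
    rw [cfQ_succ b (n + 1), cfQ_succ b n]
    simp only [cfP, cfQ]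
    ring

lemma cfConv_succ (b : ℕ → ℕ) (n : ℕ) (hq : cfQ (fun i => b (i + 1)) (n + 1) ≠ 0) :
    cfConv b (n + 1) = 1 / (b 1 + cfConv (fun i => b (i + 1)) n) := by
  unfold cfConv
  rw [cfP_succ b (n + 1), cfQ_succ b (n + 1), add_div' _ _ _ (by exact_mod_cast hq), one_div_div]
  push_cast
  rfl

lemma mul_add_eq_one_of_tendsto_cfConv (b : ℕ → ℕ) (hb : ∀ i, 1 ≤ i → 1 ≤ b i) {x y : ℝ}
    (hx : Tendsto (cfConv b) atTop (𝓝 x))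
    (hy : Tendsto (cfConv fun i => b (i + 1)) atTop (𝓝 y)) :
    x * (b 1 + y) = 1 := by
  have hy₀ : 0 ≤ y := ge_of_tendsto' hy (cfConv_nonneg _)
  have hb₁ : (1 : ℝ) ≤ b 1 := by exact_mod_cast hb 1 le_rfl
  have hden : (b 1 : ℝ) + y ≠ 0 := by positivity
  have hconv : ∀ n, cfConv b (n + 1) = 1 / (b 1 + cfConv (fun i => b (i + 1)) n) := fun n =>
    cfConv_succ b n (Int.one_pos.trans_le (one_le_cfQ_succ _ (fun i hi => hb _ (by omega)) _)).ne'
  have hx' : Tendsto (fun n => 1 / (b 1 + cfConv (fun i => b (i + 1)) n)) atTop (𝓝 x) := by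
    simpa only [hconv] using (tendsto_add_atTop_iff_nat 1).mpr hx
  have : x = 1 / (b 1 + y) :=
    tendsto_nhds_unique hx' (tendsto_const_nhds.div (hy.const_add _) hden)
  rw [this, one_div_mul_cancel hden]

section

variable (a : ℕ → ℕ) (X : ℕ → ℝ)

lemma mul_cfQ_sub_cfP_succ (hX : ∀ k, 1 ≤ k → X k * (a k + X (k + 1)) = 1) :
    ∀ m, X 1 * cfQ a (m + 1) - cfP a (m + 1) = -X (m + 1) * (X 1 * cfQ a m - cfP a m)
  | 0 => by simp [cfP, cfQ]
  | m + 1 => by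
    have ih := mul_cfQ_sub_cfP_succ hX m
    have hrec := hX (m + 1) (by omega)
    simp only [cfP, cfQ]
    push_cast
    linear_combination (a (m + 1) + X (m + 2)) * ih - (X 1 * cfQ a m - cfP a m) * hrec

lemma mul_cfQ_sub_cfP_eq_prod (hX : ∀ k, 1 ≤ k → X k * (a k + X (k + 1)) = 1) :
    ∀ n, X 1 * cfQ a n - cfP a n = (-1) ^ (n + 1) * ∏ k ∈ Finset.Icc 1 n, X k
  | 0 => by simp [cfP, cfQ]
  | n + 1 => by
    rw [mul_cfQ_sub_cfP_succ a X hX, mul_cfQ_sub_cfP_eq_prod hX n,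
      Finset.prod_Icc_succ_top (by omega)]
    ring

end

lemma cfShift_tail (a : ℕ → ℕ) (k : ℕ) : (fun i => cfShift a k (i + 1)) = cfShift a (k + 1) := by
  funext i
  simp only [cfShift]
  congr 1
  omega

theorem cf_tail_product_general (a : ℕ → ℕ) (ha : ∀ k, 1 ≤ k → 1 ≤ a k)
    (X : ℕ → ℝ)
    (hX : ∀ k, 1 ≤ k → Tendsto (cfConv (cfShift a k)) atTop (𝓝 (X k)))
    (n : ℕ) :
    (∏ k ∈ Finset.Icc 1 n, X k) = |X 1 * (cfQ a n : ℝ) - (cfP a n : ℝ)| := by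
  have hX₀ : ∀ k ∈ Finset.Icc 1 n, 0 ≤ X k := fun k hk =>
    ge_of_tendsto' (hX k (Finset.mem_Icc.mp hk).1) (cfConv_nonneg _)
  have hrec : ∀ k, 1 ≤ k → X k * (a k + X (k + 1)) = 1 := by
    intro k hk
    have h := mul_add_eq_one_of_tendsto_cfConv (cfShift a k)
      (fun i hi => ha _ (by omega)) (hX k hk)
      (by simpa only [cfShift_tail] using hX (k + 1) (by omega))
    simpa [cfShift] using h
  rw [mul_cfQ_sub_cfP_eq_prod a X hrec, abs_mul, abs_pow, abs_neg, abs_one, one_pow, one_mul,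
    abs_of_nonneg (Finset.prod_nonneg hX₀)]

/-- For every `n ≥ 1`, `X_1 X_2 ⋯ X_n = |X_1 Q_{n−1} − P_{n−1}|`, where `X k`
is the value of the infinite continued fraction `[a_k, a_{k+1}, …]`. -/
theorem cf_tail_product (a : ℕ → ℕ) (ha : ∀ k, 1 ≤ k → 1 ≤ a k)
    (X : ℕ → ℝ)
    (hX : ∀ k, 1 ≤ k → Tendsto (cfConv (cfShift a k)) atTop (𝓝 (X k)))
    (n : ℕ) (hn : 1 ≤ n) :
    (∏ k ∈ Finset.Icc 1 n, X k) = |X 1 * (cfQ a n : ℝ) - (cfP a n : ℝ)| :=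
  cf_tail_product_general a ha X hX n
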